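/- Suppose P is ergodic and reversible with stationary distribution π and mixing time t* = τ(1/4). Then for any vertex w and any T > 0, the visit frequency of the SRT-router model satisfies |X_w^{(T)} − M^{(T)}_w| ≤ 3 π_w t* · max_{u∈V} (δ(u)/π_u), where δ(u) = |N(u)|. -/

import Mathlib

/-!
Summing the router dynamics over time gives `X_{s+1} = μ₀ + X_s P + D_s`, where
`D_s(u) = ∑_v (#{j < X_s(v) | σ_v(j) = u} - X_s(v) P(v,u))` is the discrepancy accumulated by
the routers, so by the discrete Duhamel formula `X_T - M_T = ∑_{s<T} D_{T-1-s} P^s`.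
Every router's discrepancy row has total mass zero, entries of size at most one, and lives on the
out-edges of its vertex; hence its contribution through `P^s` at `w` is at most
`∑_u δ(u) |P^s(u,w) - π_w|`. Reversibility turns `π_u |P^s(u,w) - π_w|` into
`π_w |P^s(w,u) - π_u|`, and these `ℓ¹` distances from stationarity sum to at most `3 t*`: they are
at most `2` before `t*`, at most `1/2` at `t*`, and halve every `t*` steps.
-/

open Finset Matrix

lemma sum_range_le_three_mul {a : ℕ → ℝ} {m : ℕ} (h0 : ∀ r, 0 ≤ a r) (h2 : ∀ r, a r ≤ 2)
    (hm : ∀ r, a (m + r) ≤ 1 / 2) (hhalf : ∀ r, a (m + r) ≤ a r / 2) (N : ℕ) :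
    ∑ r ∈ range N, a r ≤ 3 * m := by
  have extend : ∀ b : ℕ → ℝ, (∀ r, 0 ≤ b r) →
      ∑ r ∈ range N, b r ≤ ∑ r ∈ range m, b r + ∑ r ∈ range N, b (m + r) := fun b hb => by
    rw [← sum_range_add]
    exact sum_le_sum_of_subset_of_nonneg (range_subset_range.2 (by omega)) fun r _ _ => hb r
  have htail : ∑ r ∈ range N, a (m + r) ≤ m := by
    have := extend (fun r => a (m + r)) fun r => h0 _
    have h1 : ∑ r ∈ range m, a (m + r) ≤ m / 2 := by
      simpa [div_eq_mul_inv, mul_comm] using sum_le_sum fun r (_ : r ∈ range m) => hm r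
    have h2' : ∑ r ∈ range N, a (m + (m + r)) ≤ (∑ r ∈ range N, a (m + r)) / 2 := by
      rw [sum_div]; exact sum_le_sum fun r _ => hhalf _
    linarith
  have hhead : ∑ r ∈ range m, a r ≤ 2 * m := by
    simpa [mul_comm] using sum_le_sum fun r (_ : r ∈ range m) => h2 r
  linarith [extend a h0]

lemma sum_abs_vecMul_le {m n : Type*} [Fintype m] [Fintype n] {ξ : m → ℝ} {Q : Matrix m n ℝ}
    (g : n → ℝ) {B : ℝ} (hξ : ∑ z, ξ z = 0) (hB : ∀ z, ∑ y, |Q z y - g y| ≤ B) :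
    ∑ y, |(ξ ᵥ* Q) y| ≤ B * ∑ z, |ξ z| := by
  have hcentre : ∀ y, (ξ ᵥ* Q) y = ∑ z, ξ z * (Q z y - g y) := fun y => by
    simp only [vecMul, dotProduct, mul_sub, sum_sub_distrib, ← sum_mul, hξ, zero_mul, sub_zero]
  calc ∑ y, |(ξ ᵥ* Q) y| ≤ ∑ y, ∑ z, |ξ z| * |Q z y - g y| := by
        simp only [hcentre, ← abs_mul]
        exact sum_le_sum fun y _ => abs_sum_le_sum_abs _ _
    _ = ∑ z, |ξ z| * ∑ y, |Q z y - g y| := by rw [sum_comm]; simp only [mul_sum]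
    _ ≤ ∑ z, |ξ z| * B := sum_le_sum fun z _ => mul_le_mul_of_nonneg_left (hB z) (abs_nonneg _)
    _ = B * ∑ z, |ξ z| := by rw [← sum_mul, mul_comm]

lemma vecMul_pow_eq_of_succ {R V : Type*} [Semiring R] [Fintype V] [DecidableEq V]
    {P : Matrix V V R} {x d : ℕ → V → R} (h : ∀ t, x (t + 1) = x t ᵥ* P + d t) (T : ℕ) :
    x T = x 0 ᵥ* P ^ T + ∑ s ∈ range T, d (T - 1 - s) ᵥ* P ^ s := by
  induction T with
  | zero => simp
  | succ T ih =>
    rw [h, ih, add_vecMul, vecMul_vecMul, ← pow_succ, sum_vecMul, sum_range_succ', add_assoc]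
    congr 2
    · refine sum_congr rfl fun s _ => ?_
      rw [vecMul_vecMul, ← pow_succ, show T + 1 - 1 - (s + 1) = T - 1 - s by omega]
    · simp

lemma abs_sum_sum_mul_le {V : Type*} [Fintype V] {P ε : V → V → ℝ} (a : V → ℝ) (c : ℝ)
    (hsum : ∀ v, ∑ u, ε v u = 0) (hle : ∀ v u, |ε v u| ≤ 1)
    (hsupp : ∀ v u, ¬ 0 < P v u → ε v u = 0) :
    |∑ u, (∑ v, ε v u) * a u| ≤ ∑ u, (#{v | 0 < P v u} : ℝ) * |a u - c| := by
  have hcentre : ∑ u, (∑ v, ε v u) * a u = ∑ v, ∑ u, ε v u * (a u - c) := by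
    simp only [mul_sub, sum_sub_distrib, ← sum_mul, hsum, zero_mul, sub_zero]
    rw [sum_comm]; simp only [sum_mul]
  have hterm : ∀ v u, |ε v u * (a u - c)| ≤ if 0 < P v u then |a u - c| else 0 := by
    intro v u
    split_ifs with h
    · rw [abs_mul]; exact mul_le_of_le_one_left (abs_nonneg _) (hle v u)
    · simp [hsupp v u h]
  calc |∑ u, (∑ v, ε v u) * a u| ≤ ∑ v, ∑ u, |ε v u * (a u - c)| := by
        rw [hcentre]
        exact (abs_sum_le_sum_abs _ _).trans (sum_le_sum fun v _ => abs_sum_le_sum_abs _ _)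
    _ ≤ ∑ v, ∑ u, if 0 < P v u then |a u - c| else 0 :=
        sum_le_sum fun v _ => sum_le_sum fun u _ => hterm v u
    _ = ∑ u, (#{v | 0 < P v u} : ℝ) * |a u - c| := by
        rw [sum_comm]; simp only [← sum_filter, sum_const, nsmul_eq_mul]

lemma sum_mul_le_sup'_div_mul_sum {V : Type*} [Fintype V] [Nonempty V] {f g a : V → ℝ}
    (hg : ∀ u, 0 < g u) (ha : ∀ u, 0 ≤ a u) :
    ∑ u, f u * a u ≤ univ.sup' univ_nonempty (fun u => f u / g u) * ∑ u, g u * a u := by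
  rw [mul_sum]
  refine sum_le_sum fun u _ => ?_
  calc f u * a u = f u / g u * (g u * a u) := by field_simp [(hg u).ne']
    _ ≤ _ := mul_le_mul_of_nonneg_right (le_sup' (fun u => f u / g u) (mem_univ u))
        (mul_nonneg (hg u).le (ha u))

lemma card_filter_pos_apply_comm {V : Type*} [Fintype V] {P : V → V → ℝ} {π : V → ℝ}
    (hπ : ∀ v, 0 < π v) (hrev : ∀ u v, π u * P u v = π v * P v u) (u : V) :
    #{v | 0 < P v u} = #{v | 0 < P u v} := by
  congr 1
  refine filter_congr fun v _ => ?_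
  rw [← mul_pos_iff_of_pos_left (hπ v), hrev, mul_pos_iff_of_pos_left (hπ u)]

section StationaryDist

variable {V : Type*} [Fintype V] [DecidableEq V] {P : Matrix V V ℝ} {π : V → ℝ}

lemma vecMul_pow_eq_of_vecMul_eq (h : π ᵥ* P = π) (t : ℕ) : π ᵥ* P ^ t = π := by
  induction t with
  | zero => simp
  | succ t ih => rw [pow_succ, ← vecMul_vecMul, ih, h]

lemma mul_pow_apply_comm (hrev : ∀ u v, π u * P u v = π v * P v u) (t : ℕ) (u v : V) :
    π u * (P ^ t) u v = π v * (P ^ t) v u := by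
  induction t generalizing v with
  | zero => by_cases h : u = v <;> simp [one_apply, h, eq_comm]
  | succ t ih =>
    conv_lhs => rw [pow_succ, mul_apply, mul_sum]
    conv_rhs => rw [pow_succ', mul_apply, mul_sum]
    refine sum_congr rfl fun x _ => ?_
    linear_combination P x v * ih x + (P ^ t) x u * hrev x v

/-- Twice the total variation distance between the `t`-step distribution from `x` and `π`. -/
def stationaryDist (P : Matrix V V ℝ) (π : V → ℝ) (t : ℕ) (x : V) : ℝ :=
  ∑ y, |(P ^ t) x y - π y|

lemma stationaryDist_nonneg (t : ℕ) (x : V) : 0 ≤ stationaryDist P π t x :=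
  sum_nonneg fun _ _ => abs_nonneg _

lemma stationaryDist_le_two (hP : P ∈ rowStochastic ℝ V) (hπ0 : ∀ v, 0 ≤ π v)
    (hπ1 : ∑ v, π v = 1) (t : ℕ) (x : V) : stationaryDist P π t x ≤ 2 := by
  have hPt := pow_mem hP t
  calc stationaryDist P π t x ≤ ∑ y, ((P ^ t) x y + π y) :=
        sum_le_sum fun y _ => abs_sub_le_iff.2
          ⟨by linarith [hπ0 y], by linarith [nonneg_of_mem_rowStochastic hPt (i := x) (j := y)]⟩
    _ = 2 := by rw [sum_add_distrib, sum_row_of_mem_rowStochastic hPt, hπ1]; norm_num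

lemma stationaryDist_add_le (hP : P ∈ rowStochastic ℝ V) (hπ1 : ∑ v, π v = 1)
    (hπP : π ᵥ* P = π) (g : V → ℝ) {B : ℝ} {m : ℕ} (hB : ∀ z, ∑ y, |(P ^ m) z y - g y| ≤ B)
    (t : ℕ) (x : V) : stationaryDist P π (t + m) x ≤ B * stationaryDist P π t x := by
  have hrow : ∀ y, (P ^ (t + m)) x y - π y = (((P ^ t) x - π) ᵥ* P ^ m) y := fun y => by
    rw [sub_vecMul, vecMul_pow_eq_of_vecMul_eq hπP, pow_add]
    rfl
  have hmass : ∑ z, ((P ^ t) x - π) z = 0 := by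
    simp only [Pi.sub_apply, sum_sub_distrib, sum_row_of_mem_rowStochastic (pow_mem hP t), hπ1,
      sub_self]
  simp only [stationaryDist, hrow]
  exact sum_abs_vecMul_le g hmass hB

lemma stationaryDist_antitone (hP : P ∈ rowStochastic ℝ V) (hπ1 : ∑ v, π v = 1)
    (hπP : π ᵥ* P = π) (x : V) : Antitone fun t => stationaryDist P π t x := by
  refine antitone_nat_of_succ_le fun t => ?_
  have hB : ∀ z, ∑ y, |(P ^ 1) z y - 0| ≤ 1 := fun z => by
    simp only [pow_one, sub_zero, abs_of_nonneg (nonneg_of_mem_rowStochastic hP),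
      sum_row_of_mem_rowStochastic hP, le_refl]
  simpa using stationaryDist_add_le hP hπ1 hπP 0 hB t x

/-- Doeblin's argument: if every entry of `P ^ t₀` is at least `c > 0`, then `P ^ t₀` contracts
the distance to `π` by the factor `1 - |V| c < 1`. -/
lemma exists_stationaryDist_le [Nonempty V] (hP : P ∈ rowStochastic ℝ V) (hπ0 : ∀ v, 0 ≤ π v)
    (hπ1 : ∑ v, π v = 1) (hπP : π ᵥ* P = π) (herg : ∃ t₀ : ℕ, ∀ u v, 0 < (P ^ t₀) u v)
    {ε : ℝ} (hε : 0 < ε) : ∃ t, ∀ x, stationaryDist P π t x ≤ ε := by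
  obtain ⟨t₀, ht₀⟩ := herg
  set c := univ.inf' univ_nonempty fun p : V × V => (P ^ t₀) p.1 p.2
  have hc : 0 < c := (lt_inf'_iff _).2 fun p _ => ht₀ p.1 p.2
  have hcle : ∀ z y, c ≤ (P ^ t₀) z y := fun z y => inf'_le _ (mem_univ (z, y))
  set q := 1 - Fintype.card V * c
  have hrow : ∀ z, ∑ y, |(P ^ t₀) z y - c| = q := fun z => by
    simp only [fun y => abs_of_nonneg (sub_nonneg.2 (hcle z y)), sum_sub_distrib,
      sum_row_of_mem_rowStochastic (pow_mem hP t₀), sum_const, card_univ, nsmul_eq_mul, q]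
  have hq0 : 0 ≤ q := hrow (Classical.arbitrary V) ▸ sum_nonneg fun _ _ => abs_nonneg _
  have hq1 : q < 1 := by
    have : (1 : ℝ) ≤ Fintype.card V := by exact_mod_cast Fintype.card_pos
    simp only [q]; nlinarith
  have hdecay : ∀ k x, stationaryDist P π (k * t₀) x ≤ 2 * q ^ k := by
    intro k x
    induction k with
    | zero => simpa using stationaryDist_le_two hP hπ0 hπ1 0 x
    | succ k ih =>
      calc stationaryDist P π ((k + 1) * t₀) x ≤ q * stationaryDist P π (k * t₀) x := by
            rw [add_mul, one_mul]; exact stationaryDist_add_le hP hπ1 hπP _ (hrow · |>.le) _ x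
        _ ≤ q * (2 * q ^ k) := mul_le_mul_of_nonneg_left ih hq0
        _ = 2 * q ^ (k + 1) := by ring
  obtain ⟨k, hk⟩ := exists_pow_lt_of_lt_one (half_pos hε) hq1
  exact ⟨k * t₀, fun x => (hdecay k x).trans (by linarith)⟩

/-- `τ(1/4)`. Since `sInf ∅ = 0` in `ℕ`, this is only meaningful when `P` mixes. -/
noncomputable def mixingTime (P : Matrix V V ℝ) (π : V → ℝ) : ℕ :=
  univ.sup fun u => sInf {t : ℕ | (1 / 2) * stationaryDist P π t u ≤ (1 / 4 : ℝ)}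

lemma stationaryDist_mixingTime_le (hP : P ∈ rowStochastic ℝ V) (hπ0 : ∀ v, 0 ≤ π v)
    (hπ1 : ∑ v, π v = 1) (hπP : π ᵥ* P = π) (herg : ∃ t₀ : ℕ, ∀ u v, 0 < (P ^ t₀) u v)
    (x : V) : stationaryDist P π (mixingTime P π) x ≤ 1 / 2 := by
  have : Nonempty V := ⟨x⟩
  obtain ⟨t, ht⟩ := exists_stationaryDist_le hP hπ0 hπ1 hπP herg one_half_pos
  set S := {t : ℕ | (1 / 2) * stationaryDist P π t x ≤ (1 / 4 : ℝ)}
  have hS : (1 / 2) * stationaryDist P π (sInf S) x ≤ 1 / 4 :=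
    Nat.sInf_mem (s := S) ⟨t, show (1 / 2) * stationaryDist P π t x ≤ 1 / 4 by linarith [ht x]⟩
  have hle : sInf S ≤ mixingTime P π :=
    le_sup (f := fun u => sInf {t : ℕ | (1 / 2) * stationaryDist P π t u ≤ (1 / 4 : ℝ)})
      (mem_univ x)
  linarith [stationaryDist_antitone hP hπ1 hπP x hle]

lemma sum_stationaryDist_le (hP : P ∈ rowStochastic ℝ V) (hπ0 : ∀ v, 0 ≤ π v)
    (hπ1 : ∑ v, π v = 1) (hπP : π ᵥ* P = π) (herg : ∃ t₀ : ℕ, ∀ u v, 0 < (P ^ t₀) u v)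
    (x : V) (N : ℕ) : ∑ r ∈ range N, stationaryDist P π r x ≤ 3 * mixingTime P π := by
  have hmix : ∀ z, ∑ y, |(P ^ mixingTime P π) z y - π y| ≤ 1 / 2 :=
    stationaryDist_mixingTime_le hP hπ0 hπ1 hπP herg
  refine sum_range_le_three_mul (stationaryDist_nonneg · x) (stationaryDist_le_two hP hπ0 hπ1 · x)
    (fun r => ?_) (fun r => ?_) N
  · exact (stationaryDist_antitone hP hπ1 hπP x (Nat.le_add_right _ r)).trans (hmix x)
  · rw [add_comm, div_eq_inv_mul, ← one_div]; exact stationaryDist_add_le hP hπ1 hπP π hmix r x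

lemma sum_mul_abs_pow_sub_eq (hπ0 : ∀ v, 0 ≤ π v) (hrev : ∀ u v, π u * P u v = π v * P v u)
    (t : ℕ) (w : V) : ∑ u, π u * |(P ^ t) u w - π w| = π w * stationaryDist P π t w := by
  rw [stationaryDist, mul_sum]
  refine sum_congr rfl fun u _ => ?_
  calc π u * |(P ^ t) u w - π w| = |π u * ((P ^ t) u w - π w)| := by
        rw [abs_mul, abs_of_nonneg (hπ0 u)]
    _ = |π w * ((P ^ t) w u - π u)| := by
        rw [mul_sub, mul_sub, mul_pow_apply_comm hrev, mul_comm (π u)]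
    _ = π w * |(P ^ t) w u - π u| := by rw [abs_mul, abs_of_nonneg (hπ0 w)]

lemma sum_card_mul_abs_pow_sub_le [Nonempty V] (hP : P ∈ rowStochastic ℝ V) (hπ : ∀ v, 0 < π v)
    (hπ1 : ∑ v, π v = 1) (hπP : π ᵥ* P = π) (hrev : ∀ u v, π u * P u v = π v * P v u)
    (herg : ∃ t₀ : ℕ, ∀ u v, 0 < (P ^ t₀) u v) (w : V) (T : ℕ) :
    ∑ s ∈ range T, ∑ u, (#{v | 0 < P u v} : ℝ) * |(P ^ s) u w - π w| ≤
      3 * π w * mixingTime P π * univ.sup' univ_nonempty fun u => (#{v | 0 < P u v} : ℝ) / π u := by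
  have hπ0 : ∀ v, 0 ≤ π v := fun v => (hπ v).le
  set K := univ.sup' univ_nonempty fun u => (#{v | 0 < P u v} : ℝ) / π u
  have hK : 0 ≤ K := (div_nonneg (Nat.cast_nonneg _) (hπ0 w)).trans
    (le_sup' (fun u => (#{v | 0 < P u v} : ℝ) / π u) (mem_univ w))
  calc ∑ s ∈ range T, ∑ u, (#{v | 0 < P u v} : ℝ) * |(P ^ s) u w - π w|
      = ∑ u, (#{v | 0 < P u v} : ℝ) * ∑ s ∈ range T, |(P ^ s) u w - π w| := by
        rw [sum_comm]; simp only [mul_sum]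
    _ ≤ K * ∑ u, π u * ∑ s ∈ range T, |(P ^ s) u w - π w| :=
        sum_mul_le_sup'_div_mul_sum hπ fun u => sum_nonneg fun _ _ => abs_nonneg _
    _ = K * (π w * ∑ s ∈ range T, stationaryDist P π s w) := by
        simp only [mul_sum]; rw [sum_comm]; simp only [← mul_sum, sum_mul_abs_pow_sub_eq hπ0 hrev]
    _ ≤ K * (π w * (3 * mixingTime P π)) := by
        gcongr
        · exact hπ0 w
        exact sum_stationaryDist_le hP hπ0 hπ1 hπP herg w T
    _ = 3 * π w * mixingTime P π * K := by ring

end StationaryDist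

section Discrepancy

variable {V : Type*} [DecidableEq V] {f : ℕ → V} {p : V → ℝ}

def discrepancy (f : ℕ → V) (p : V → ℝ) (u : V) (n : ℕ) : ℝ :=
  Nat.count (f · = u) n - n * p u

lemma abs_discrepancy_le (hf : ∀ u (z : ℕ), 0 < z → |discrepancy f p u z| < 1) (u : V) (n : ℕ) :
    |discrepancy f p u n| ≤ 1 := by
  rcases n.eq_zero_or_pos with rfl | hn
  · simp [discrepancy]
  · exact (hf u n hn).le

lemma discrepancy_eq_zero_of_eq_zero (hf : ∀ u (z : ℕ), 0 < z → |discrepancy f p u z| < 1)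
    {u : V} (hu : p u = 0) (n : ℕ) : discrepancy f p u n = 0 := by
  rcases n.eq_zero_or_pos with rfl | hn
  · simp [discrepancy]
  · have := hf u n hn
    rw [discrepancy, hu, mul_zero, sub_zero, Nat.abs_cast] at this
    rw [discrepancy, hu, mul_zero, sub_zero, Nat.cast_eq_zero]
    exact Nat.lt_one_iff.1 (by exact_mod_cast this)

lemma sum_count_eq [Fintype V] (f : ℕ → V) (n : ℕ) : ∑ u, Nat.count (f · = u) n = n := by
  simpa only [Nat.count_eq_card_filter_range, card_range] using
    (card_eq_sum_card_fiberwise (s := range n) (t := univ) (f := f) fun j _ => mem_univ _).symm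

lemma sum_discrepancy_eq_zero [Fintype V] (hp : ∑ u, p u = 1) (n : ℕ) :
    ∑ u, discrepancy f p u n = 0 := by
  simp only [discrepancy]
  rw [sum_sub_distrib, ← mul_sum, hp, ← Nat.cast_sum, sum_count_eq, mul_one, sub_self]

end Discrepancy

section Router

variable {V : Type*} [DecidableEq V] {σ : V → ℕ → V} {χ X : ℕ → V → ℕ} {Z : ℕ → V → V → ℕ}

lemma sum_range_eq_count (hX : ∀ t v, X t v = ∑ s ∈ range t, χ s v)
    (hZ : ∀ t v u, Z t v u = ((range (χ t v)).filter (fun j => σ v (X t v + j) = u)).card)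
    (s : ℕ) (v u : V) : ∑ t ∈ range s, Z t v u = Nat.count (σ v · = u) (X s v) := by
  induction s with
  | zero => simp [hX]
  | succ s ih =>
    rw [sum_range_succ, ih, hX (s + 1), sum_range_succ, ← hX, Nat.count_add, hZ,
      ← Nat.count_eq_card_filter_range]

lemma apply_succ_eq_add_sum_count [Fintype V] (hX : ∀ t v, X t v = ∑ s ∈ range t, χ s v)
    (hZ : ∀ t v u, Z t v u = ((range (χ t v)).filter (fun j => σ v (X t v + j) = u)).card)
    (hrec : ∀ t u, χ (t + 1) u = ∑ v, Z t v u) (s : ℕ) (u : V) :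
    X (s + 1) u = χ 0 u + ∑ v, Nat.count (σ v · = u) (X s v) := by
  simp only [hX (s + 1), sum_range_succ', hrec, add_comm (χ 0 u)]
  rw [sum_comm]
  simp only [sum_range_eq_count hX hZ]

lemma cast_apply_sub_sum_eq_sum_discrepancy [Fintype V] {P : Matrix V V ℝ} {μ0 : V → ℝ}
    (hX : ∀ t v, X t v = ∑ s ∈ range t, χ s v)
    (hZ : ∀ t v u, Z t v u = ((range (χ t v)).filter (fun j => σ v (X t v + j) = u)).card)
    (hrec : ∀ t u, χ (t + 1) u = ∑ v, Z t v u) (hμ0 : ∀ v, μ0 v = χ 0 v) (T : ℕ) (w : V) :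
    (X T w : ℝ) - ∑ t ∈ range T, ∑ u, μ0 u * (P ^ t) u w =
      ∑ s ∈ range T, ∑ u, (∑ v, discrepancy (σ v) (P v) u (X (T - 1 - s) v)) * (P ^ s) u w := by
  have hstep : ∀ s, (fun u => (X (s + 1) u : ℝ)) = (fun u => (X s u : ℝ)) ᵥ* P +
      (μ0 + fun u => ∑ v, discrepancy (σ v) (P v) u (X s v)) := fun s => by
    funext u
    simp only [apply_succ_eq_add_sum_count hX hZ hrec, hμ0, discrepancy, vecMul, dotProduct,
      Pi.add_apply, sum_sub_distrib, Nat.cast_add, Nat.cast_sum]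
    ring
  rw [congrFun (vecMul_pow_eq_of_succ (x := fun s u => (X s u : ℝ)) hstep T) w]
  simp only [hX 0, range_zero, sum_empty, Nat.cast_zero, add_vecMul, sum_add_distrib, vecMul,
    dotProduct, Pi.add_apply, Finset.sum_apply, zero_mul, sum_const_zero, zero_add,
    add_sub_cancel_left]

end Router

theorem srt_visit_frequency_general {V : Type*} [Fintype V] [DecidableEq V] [Nonempty V]
    (P : Matrix V V ℝ) (π : V → ℝ)
    (hP0 : ∀ u v, 0 ≤ P u v) (hP1 : ∀ u, ∑ v, P u v = 1)
    (herg : ∃ t0 : ℕ, ∀ u v, 0 < (P ^ t0) u v)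
    (hπpos : ∀ v, 0 < π v) (hπ1 : ∑ v, π v = 1)
    (hstat : ∀ v, ∑ u, π u * P u v = π v)
    (hrev : ∀ u v, π u * P u v = π v * P v u)
    (tstar : ℕ)
    (htstar : tstar = univ.sup fun u =>
      sInf {t : ℕ | (1 / 2) * ∑ v, |(P ^ t) u v - π v| ≤ (1 / 4 : ℝ)})
    (σ : V → ℕ → V)
    (hσ : ∀ v u (z : ℕ), 0 < z →
      |(((range z).filter (fun j => σ v j = u)).card : ℝ) - (z : ℝ) * P v u| < 1)
    (χ : ℕ → V → ℕ) (X : ℕ → V → ℕ)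
    (hX : ∀ t v, X t v = ∑ s ∈ range t, χ s v)
    (Z : ℕ → V → V → ℕ)
    (hZ : ∀ t v u, Z t v u = ((range (χ t v)).filter (fun j => σ v (X t v + j) = u)).card)
    (hrec : ∀ t u, χ (t + 1) u = ∑ v, Z t v u)
    (μ0 : V → ℝ) (hμ0 : ∀ v, μ0 v = χ 0 v)
    (w : V) (T : ℕ) :
    |(X T w : ℝ) - ∑ t ∈ range T, ∑ u, μ0 u * (P ^ t) u w| ≤
      3 * π w * tstar *
        univ.sup' univ_nonempty
          (fun u => ((univ.filter fun x => 0 < P u x).card : ℝ) / π u) := by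
  obtain rfl : tstar = mixingTime P π := htstar
  have hσ' : ∀ v u (z : ℕ), 0 < z → |discrepancy (σ v) (P v) u z| < 1 := by
    simpa only [discrepancy, Nat.count_eq_card_filter_range] using hσ
  have hstep : ∀ s n, |∑ u, (∑ v, discrepancy (σ v) (P v) u (X n v)) * (P ^ s) u w| ≤
      ∑ u, (#{v | 0 < P u v} : ℝ) * |(P ^ s) u w - π w| := fun s n => by
    simp only [← card_filter_pos_apply_comm hπpos hrev]
    exact abs_sum_sum_mul_le _ _ (fun v => sum_discrepancy_eq_zero (hP1 v) _)
      (fun v u => abs_discrepancy_le (hσ' v) u _) fun v u h =>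
        discrepancy_eq_zero_of_eq_zero (hσ' v) (le_antisymm (not_lt.1 h) (hP0 v u)) _
  rw [cast_apply_sub_sum_eq_sum_discrepancy hX hZ hrec hμ0]
  exact (abs_sum_le_sum_abs _ _).trans <| (sum_le_sum fun s _ => hstep s _).trans <|
    sum_card_mul_abs_pow_sub_le (mem_rowStochastic_iff_sum.2 ⟨hP0, hP1⟩) hπpos hπ1
      (funext hstat) hrev herg w T

/-- Theorem 1 (visit frequency): for ergodic reversible `P`,
`|X_w^{(T)} − M_w^{(T)}| ≤ 3 π_w t* max_u (δ(u)/π_u)`. -/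
theorem srt_visit_frequency {V : Type*} [Fintype V] [DecidableEq V] [Nonempty V]
    (P : Matrix V V ℝ) (π : V → ℝ)
    (hP0 : ∀ u v, 0 ≤ P u v) (hP1 : ∀ u, ∑ v, P u v = 1)
    (herg : ∃ t0 : ℕ, ∀ u v, 0 < (P ^ t0) u v)
    (hπpos : ∀ v, 0 < π v) (hπ1 : ∑ v, π v = 1)
    (hstat : ∀ v, ∑ u, π u * P u v = π v)
    (hrev : ∀ u v, π u * P u v = π v * P v u)
    (tstar : ℕ)
    (htstar : tstar = univ.sup fun u =>
      sInf {t : ℕ | (1 / 2) * ∑ v, |(P ^ t) u v - π v| ≤ (1 / 4 : ℝ)})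
    (σ : V → ℕ → V)
    (hσ : ∀ v u (z : ℕ), 0 < z →
      |(((range z).filter (fun j => σ v j = u)).card : ℝ) - (z : ℝ) * P v u| < 1)
    (χ : ℕ → V → ℕ) (X : ℕ → V → ℕ)
    (hX : ∀ t v, X t v = ∑ s ∈ range t, χ s v)
    (Z : ℕ → V → V → ℕ)
    (hZ : ∀ t v u, Z t v u = ((range (χ t v)).filter (fun j => σ v (X t v + j) = u)).card)
    (hrec : ∀ t u, χ (t + 1) u = ∑ v, Z t v u)
    (μ0 : V → ℝ) (hμ0 : ∀ v, μ0 v = χ 0 v)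
    (w : V) (T : ℕ) (hT : 0 < T) :
    |(X T w : ℝ) - ∑ t ∈ range T, ∑ u, μ0 u * (P ^ t) u w| ≤
      3 * π w * tstar *
        univ.sup' univ_nonempty
          (fun u => ((univ.filter fun x => 0 < P u x).card : ℝ) / π u) :=
  srt_visit_frequency_general P π hP0 hP1 herg hπpos hπ1 hstat hrev tstar htstar σ hσ χ X hX Z hZ
    hrec μ0 hμ0 w T
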